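/- Two graphs Γ₁ and Γ₂ on the same vertex set V are associated to the same two-graph if and only if they are switching equivalent. -/

import Mathlib

open scoped Classical in
/-- Seidel switching of a graph with respect to a vertex subset `Y`. -/
noncomputable def SimpleGraph.switch {V : Type*} (G : SimpleGraph V) (Y : Set V) :
    SimpleGraph V where
  Adj u v := u ≠ v ∧ if (u ∈ Y) = (v ∈ Y) then G.Adj u v else ¬ G.Adj u v
  symm := ⟨by
    rintro u v ⟨hne, h⟩
    refine ⟨hne.symm, ?_⟩
    by_cases hm : (u ∈ Y) = (v ∈ Y)
    · rw [if_pos hm] at h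
      rw [if_pos hm.symm]
      exact h.symm
    · rw [if_neg hm] at h
      rw [if_neg fun he => hm he.symm]
      exact fun ha => h ha.symm⟩
  loopless := ⟨fun u h => h.1 rfl⟩

open scoped Classical in
/-- The number of edges of `G` contained in the finite vertex set `t`. -/
noncomputable def SimpleGraph.edgeCountIn {V : Type*} (G : SimpleGraph V) (t : Finset V) : ℕ :=
  ((t.powersetCard 2).filter fun e => ∃ a ∈ e, ∃ b ∈ e, G.Adj a b).card

/-- The two-graph associated with a graph: the 3-subsets of vertices carrying an odd number
of edges. -/
noncomputable def SimpleGraph.twoGraph {V : Type*} (G : SimpleGraph V) : Set (Finset V) :=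
  {t | t.card = 3 ∧ Odd (G.edgeCountIn t)}

/-!
Switching with respect to `Y` flips the adjacency of exactly the pairs separated by `Y`, and
every triple contains an even number of separated pairs, so switching preserves the parity of
the number of edges in each triple. Conversely, if the parities agree, the relation "`G₁` and
`G₂` agree on the pair `{u, v}`" satisfies `R a b ↔ (R a c ↔ R b c)` on every triple. Such a
relation says "`u` and `v` lie on the same side of `Y`", where `Y` consists of a fixed vertex
`v₀` and the vertices `u` with `R u v₀`.
-/

theorem Finset.powersetCard_two_triple {α : Type*} [DecidableEq α] {a b c : α} (hab : a ≠ b)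
    (hac : a ≠ c) (hbc : b ≠ c) :
    ({a, b, c} : Finset α).powersetCard 2 = {{a, b}, {a, c}, {b, c}} := by
  rw [Finset.powersetCard_succ_insert (by simp [hab, hac]),
    show Nat.succ 1 = ({b, c} : Finset α).card from (Finset.card_pair hbc).symm,
    Finset.powersetCard_self, Finset.powersetCard_one]
  ext s
  simp only [Finset.mem_union, Finset.mem_singleton, Finset.mem_image, Finset.mem_map,
    Finset.mem_insert, Function.Embedding.coeFn_mk]
  aesop

theorem iff_iff_iff_iff_iff_iff_comm {p q r p' q' r' : Prop} :
    ((p ↔ (q ↔ r)) ↔ (p' ↔ (q' ↔ r'))) ↔ ((p ↔ p') ↔ ((q ↔ q') ↔ (r ↔ r'))) := by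
  by_cases p <;> by_cases q <;> by_cases r <;> by_cases p' <;> by_cases q' <;> by_cases r' <;>
    simp_all

theorem exists_set_iff_mem_iff_mem_iff_triangle {V : Type*} {R : V → V → Prop}
    (hR : Std.Symm R) :
    (∃ Y : Set V, ∀ u v, u ≠ v → (R u v ↔ (u ∈ Y ↔ v ∈ Y))) ↔
      ∀ a b c, a ≠ b → a ≠ c → b ≠ c → (R a b ↔ (R a c ↔ R b c)) := by
  constructor
  · rintro ⟨Y, hY⟩ a b c hab hac hbc
    rw [hY a b hab, hY a c hac, hY b c hbc]
    tauto
  · intro h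
    rcases isEmpty_or_nonempty V with hV | ⟨⟨v₀⟩⟩
    · exact ⟨∅, fun u => isEmptyElim u⟩
    refine ⟨{u | u = v₀ ∨ R u v₀}, fun u v huv => ?_⟩
    simp only [Set.mem_ofPred_eq]
    by_cases hu : u = v₀
    · subst hu
      simp only [true_or, true_iff, Ne.symm huv, false_or]
      exact ⟨hR.symm _ _, hR.symm _ _⟩
    by_cases hv : v = v₀
    · subst hv
      simp [hu]
    simp only [hu, hv, false_or]
    exact h u v v₀ huv hu hv

namespace SimpleGraph

variable {V : Type*}

theorem switch_adj (G : SimpleGraph V) (Y : Set V) (u v : V) :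
    (G.switch Y).Adj u v ↔ u ≠ v ∧ (G.Adj u v ↔ (u ∈ Y ↔ v ∈ Y)) := by
  simp only [switch]
  split_ifs with h <;> simp only [eq_iff_iff] at h <;> tauto

theorem switch_eq_iff (G H : SimpleGraph V) (Y : Set V) :
    G.switch Y = H ↔ ∀ u v, u ≠ v → ((G.Adj u v ↔ H.Adj u v) ↔ (u ∈ Y ↔ v ∈ Y)) := by
  simp only [SimpleGraph.ext_iff, funext_iff, eq_iff_iff, switch_adj]
  refine forall_congr' fun u => forall_congr' fun v => ?_
  by_cases huv : u = v
  · subst huv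
    simp
  · simp only [huv, ne_eq, not_false_eq_true, true_and, forall_const]
    tauto

open scoped Classical in
theorem edgeCountIn_triple [DecidableEq V] (G : SimpleGraph V) {a b c : V} (hab : a ≠ b)
    (hac : a ≠ c) (hbc : b ≠ c) :
    G.edgeCountIn {a, b, c} =
      (if G.Adj a b then 1 else 0) + ((if G.Adj a c then 1 else 0) +
        (if G.Adj b c then 1 else 0)) := by
  have hab_notMem : ({a, b} : Finset V) ∉ ({{a, c}, {b, c}} : Finset (Finset V)) := by
    simp only [Finset.mem_insert, Finset.mem_singleton, Finset.ext_iff, not_or]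
    exact ⟨fun h => by simpa [hab.symm, hbc] using (h b).1,
      fun h => by simpa [hab, hac] using (h a).1⟩
  have hac_ne : ({a, c} : Finset V) ≠ {b, c} := fun h => by
    simpa [hab, hac] using h.subset (Finset.mem_insert_self a {c})
  have pair_adj : ∀ x y : V,
      (∃ u ∈ ({x, y} : Finset V), ∃ v ∈ ({x, y} : Finset V), G.Adj u v) ↔ G.Adj x y := by
    intro x y
    simp [G.adj_comm y x]
  rw [edgeCountIn, Finset.powersetCard_two_triple hab hac hbc, Finset.card_filter,
    Finset.sum_insert hab_notMem, Finset.sum_pair hac_ne]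
  simp only [pair_adj]

theorem odd_edgeCountIn_triple [DecidableEq V] (G : SimpleGraph V) {a b c : V} (hab : a ≠ b)
    (hac : a ≠ c) (hbc : b ≠ c) :
    Odd (G.edgeCountIn {a, b, c}) ↔ (G.Adj a b ↔ (G.Adj a c ↔ G.Adj b c)) := by
  rw [G.edgeCountIn_triple hab hac hbc]
  split_ifs <;> simp_all [Nat.odd_iff]

theorem twoGraph_eq_iff (G₁ G₂ : SimpleGraph V) :
    G₁.twoGraph = G₂.twoGraph ↔ ∀ a b c : V, a ≠ b → a ≠ c → b ≠ c →
      ((G₁.Adj a b ↔ G₂.Adj a b) ↔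
        ((G₁.Adj a c ↔ G₂.Adj a c) ↔ (G₁.Adj b c ↔ G₂.Adj b c))) := by
  classical
  simp only [Set.ext_iff, twoGraph, Set.mem_ofPred_eq]
  constructor
  · intro h a b c hab hac hbc
    have hcard : ({a, b, c} : Finset V).card = 3 :=
      Finset.card_eq_three.mpr ⟨a, b, c, hab, hac, hbc, rfl⟩
    simpa only [hcard, true_and, G₁.odd_edgeCountIn_triple hab hac hbc,
      G₂.odd_edgeCountIn_triple hab hac hbc, iff_iff_iff_iff_iff_iff_comm] using h {a, b, c}
  · intro h t
    refine and_congr_right fun ht => ?_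
    obtain ⟨a, b, c, hab, hac, hbc, rfl⟩ := Finset.card_eq_three.mp ht
    rw [G₁.odd_edgeCountIn_triple hab hac hbc, G₂.odd_edgeCountIn_triple hab hac hbc,
      iff_iff_iff_iff_iff_iff_comm]
    exact h a b c hab hac hbc

end SimpleGraph

theorem twoGraph_eq_iff_switchEquiv_general {V : Type*} (G₁ G₂ : SimpleGraph V) :
    G₁.twoGraph = G₂.twoGraph ↔ ∃ Y : Set V, G₁.switch Y = G₂ := by
  have agree_symm : Std.Symm fun u v => G₁.Adj u v ↔ G₂.Adj u v :=
    ⟨fun u v h => by rwa [G₁.adj_comm, G₂.adj_comm]⟩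
  simp only [SimpleGraph.switch_eq_iff]
  rw [exists_set_iff_mem_iff_mem_iff_triangle agree_symm, SimpleGraph.twoGraph_eq_iff]

/-- Two graphs on the same vertex set have the same associated two-graph if and only if they
are switching equivalent. -/
theorem twoGraph_eq_iff_switchEquiv {V : Type*} [Fintype V] (G₁ G₂ : SimpleGraph V) :
    G₁.twoGraph = G₂.twoGraph ↔ ∃ Y : Set V, G₁.switch Y = G₂ :=
  twoGraph_eq_iff_switchEquiv_general G₁ G₂
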